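/- arXiv:math-ph/0409033 — 2 statements merged into one kernel-verified Lean document; each statement's English description precedes it below -/
import Mathlib

section
/- Let g ≥ 1 and P, Q ∈ ℂ^g, let C = C(P) be the companion matrix of p(x) = x^g − Σ_{k=1}^g P_k x^{k−1}, let r₁, r₂ ∈ ℂ[x], let H ∈ ℂ^g, and let r₃(x) = Σ_{k=1}^g H_k x^{k−1}. Suppose p has g pairwise distinct roots ξ_1, …, ξ_g ∈ ℂ, and suppose that for every j = 1, …, g, setting η_j = Υ(ξ_j) ⬝ Q, one has r₁(ξ_j)·η_j + ξ_j^g·r₂(ξ_j) + r₃(ξ_j) = 0. Then r₁(C) Q + r₂(C) P + H = 0 in ℂ^g. -/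
open Matrix Polynomial

/-- The companion matrix of the polynomial `x^g - ∑_{k=1}^g P_k x^{k-1}`
(0-indexed: entries `C i j = (1 if j+1 = i else 0) + (P i if j = g-1 else 0)`). -/
noncomputable def companionMat (g : ℕ) (P : Fin g → ℂ) : Matrix (Fin g) (Fin g) ℂ :=
  fun i j => (if (j : ℕ) + 1 = (i : ℕ) then 1 else 0) + (if (j : ℕ) = g - 1 then P i else 0)

/-- The vector `Υ(ξ) = (1, ξ, ξ², …, ξ^{g-1})`. -/
noncomputable def ups (g : ℕ) (ξ : ℂ) : Fin g → ℂ := fun i => ξ ^ (i : ℕ)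

lemma ups_vecMul (g : ℕ) (hg : 1 ≤ g) (P : Fin g → ℂ) (x : ℂ)
    (hroot : x ^ g = ∑ k : Fin g, P k * x ^ (k : ℕ)) :
    ups g x ᵥ* companionMat g P = x • ups g x := by
  funext k
  have hsum : ∑ i : Fin g, x ^ (i : ℕ) * P i = x ^ g := by
    rw [hroot]; exact Finset.sum_congr rfl fun i _ => mul_comm _ _
  simp only [Matrix.vecMul, dotProduct, companionMat, ups, mul_add,
    Finset.sum_add_distrib, Pi.smul_apply, smul_eq_mul]
  rcases eq_or_ne (k : ℕ) (g - 1) with hk | hk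
  · have h1 : (∑ i : Fin g, x ^ (i : ℕ) * (if (k : ℕ) + 1 = (i : ℕ) then (1:ℂ) else 0)) = 0 := by
      apply Finset.sum_eq_zero
      intro i _
      have : (k : ℕ) + 1 ≠ (i : ℕ) := by have := i.isLt; omega
      simp [this]
    have h2 : (∑ i : Fin g, x ^ (i : ℕ) * (if (k : ℕ) = g - 1 then P i else 0)) = x ^ g := by
      simp only [hk, if_true]; exact hsum
    rw [h1, h2, zero_add, ← pow_succ']
    congr 1
    omega
  · have hlt : (k : ℕ) + 1 < g := by have := k.isLt; omega
    have h1 : (∑ i : Fin g, x ^ (i : ℕ) * (if (k : ℕ) + 1 = (i : ℕ) then (1:ℂ) else 0))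
        = x ^ ((k : ℕ) + 1) := by
      rw [Finset.sum_eq_single (⟨(k : ℕ) + 1, hlt⟩ : Fin g)]
      · simp
      · intro i _ hi
        have : (k : ℕ) + 1 ≠ (i : ℕ) := fun h => hi (by simp [Fin.ext_iff, ← h])
        simp [this]
      · intro h; exact absurd (Finset.mem_univ _) h
    have h2 : (∑ i : Fin g, x ^ (i : ℕ) * (if (k : ℕ) = g - 1 then P i else 0)) = 0 := by
      simp [hk]
    rw [h1, h2, add_zero, pow_succ']

lemma ups_vecMul_pow (g : ℕ) (hg : 1 ≤ g) (P : Fin g → ℂ) (x : ℂ)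
    (hroot : x ^ g = ∑ k : Fin g, P k * x ^ (k : ℕ)) (n : ℕ) :
    ups g x ᵥ* (companionMat g P) ^ n = x ^ n • ups g x := by
  induction n with
  | zero => simp
  | succ n ih =>
    rw [pow_succ, ← Matrix.vecMul_vecMul, ih, Matrix.smul_vecMul,
      ups_vecMul g hg P x hroot, smul_smul, ← pow_succ]

lemma ups_vecMul_aeval (g : ℕ) (hg : 1 ≤ g) (P : Fin g → ℂ) (x : ℂ)
    (hroot : x ^ g = ∑ k : Fin g, P k * x ^ (k : ℕ)) (r : Polynomial ℂ) :
    ups g x ᵥ* (Polynomial.aeval (companionMat g P) r) = r.eval x • ups g x := by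
  induction r using Polynomial.induction_on' with
  | add p q hp hq =>
    rw [map_add, Matrix.vecMul_add, hp, hq, eval_add, add_smul]
  | monomial n a =>
    rw [aeval_monomial, eval_monomial, ← smul_eq_mul (a := algebraMap ℂ _ a),
      algebraMap_smul]
    have hs : ups g x ᵥ* (a • companionMat g P ^ n)
        = a • (ups g x ᵥ* companionMat g P ^ n) := by
      funext j
      simp [Matrix.vecMul, dotProduct, Finset.mul_sum, mul_left_comm]
    rw [hs, ups_vecMul_pow g hg P x hroot, smul_smul]

theorem linear_relation_for_coefficients (g : ℕ) (hg : 1 ≤ g) (P Q : Fin g → ℂ)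
    (C : Matrix (Fin g) (Fin g) ℂ) (hC : C = companionMat g P)
    (r₁ r₂ : Polynomial ℂ) (H : Fin g → ℂ)
    (ξ : Fin g → ℂ) (hdist : Function.Injective ξ)
    (hroot : ∀ j : Fin g, ξ j ^ g = ∑ k : Fin g, P k * ξ j ^ (k : ℕ))
    (hvanish : ∀ j : Fin g,
      r₁.eval (ξ j) * (ups g (ξ j) ⬝ᵥ Q) + ξ j ^ g * r₂.eval (ξ j)
        + (∑ k : Fin g, H k * ξ j ^ (k : ℕ)) = 0) :
    (Polynomial.aeval C r₁).mulVec Q + (Polynomial.aeval C r₂).mulVec P + H = 0 := by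
  subst hC
  set w : Fin g → ℂ :=
    (Polynomial.aeval (companionMat g P) r₁).mulVec Q
      + (Polynomial.aeval (companionMat g P) r₂).mulVec P + H with hw
  have key : ∀ j : Fin g, ups g (ξ j) ⬝ᵥ w = 0 := by
    intro j
    have hP : ups g (ξ j) ⬝ᵥ P = ξ j ^ g := by
      rw [hroot j]
      simp only [dotProduct, ups]
      exact Finset.sum_congr rfl fun i _ => mul_comm _ _
    have hH : ups g (ξ j) ⬝ᵥ H = ∑ k : Fin g, H k * ξ j ^ (k : ℕ) := by
      simp only [dotProduct, ups]
      exact Finset.sum_congr rfl fun i _ => mul_comm _ _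
    rw [hw]
    rw [dotProduct_add, dotProduct_add, Matrix.dotProduct_mulVec,
      Matrix.dotProduct_mulVec, ups_vecMul_aeval g hg P (ξ j) (hroot j),
      ups_vecMul_aeval g hg P (ξ j) (hroot j), smul_dotProduct,
      smul_dotProduct, hP, hH]
    have := hvanish j
    simp only [smul_eq_mul]
    linear_combination this
  have hvand : (Matrix.vandermonde ξ).mulVec w = 0 := by
    funext j
    have : (Matrix.vandermonde ξ).mulVec w j = ups g (ξ j) ⬝ᵥ w := by
      simp [Matrix.mulVec, Matrix.vandermonde, ups, dotProduct]
    rw [this, key j]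
    rfl
  have hdet : (Matrix.vandermonde ξ).det ≠ 0 :=
    Matrix.det_vandermonde_ne_zero_iff.mpr hdist
  exact Matrix.eq_zero_of_mulVec_eq_zero hdet hvand
end

section
/- Let g ≥ 1 and P, Q ∈ ℂ^g, let C = C(P) be the companion matrix of p(x) = x^g − Σ_{k=1}^g P_k x^{k−1}, let r₁, r₂ ∈ ℂ[x], let H ∈ ℂ^g, and let r₃(x) = Σ_{k=1}^g H_k x^{k−1}. Suppose p has g pairwise distinct roots ξ_1, …, ξ_g ∈ ℂ, that for every j = 1, …, g one has r₁(ξ_j)·(Υ(ξ_j) ⬝ Q) + ξ_j^g·r₂(ξ_j) + r₃(ξ_j) = 0, and that the matrix r₁(C) is invertible. Then Q = −(r₁(C))^{−1}(H + r₂(C) P). -/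
open Matrix Polynomial

/-!
Each root `ξ` of `p` makes `Υ(ξ)` a left eigenvector of `C = C(P)` with eigenvalue `ξ`, so
`Υ(ξ) ⬝ r(C) v = r(ξ) (Υ(ξ) ⬝ v)` for every polynomial `r`. Pairing
`v = r₁(C) Q + H + r₂(C) P` with `Υ(ξⱼ)` therefore gives exactly the left-hand side of the
`j`-th vanishing condition (using `Υ(ξ) ⬝ P = ξ^g`). The vectors `Υ(ξⱼ)` are the rows of an
invertible Vandermonde matrix, hence `v = 0`, and inverting `r₁(C)` gives `Q`.
-/

lemma ups_dotProduct (g : ℕ) (ξ : ℂ) (c : Fin g → ℂ) :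
    ups g ξ ⬝ᵥ c = ∑ k : Fin g, c k * ξ ^ (k : ℕ) :=
  Finset.sum_congr rfl fun _ _ => mul_comm _ _

lemma ups_vecMul_companionMat {g : ℕ} {P : Fin g → ℂ} {ξ : ℂ}
    (hroot : ξ ^ g = ∑ k : Fin g, P k * ξ ^ (k : ℕ)) :
    ups g ξ ᵥ* companionMat g P = ξ • ups g ξ := by
  funext j
  have hj := j.isLt
  simp only [vecMul, dotProduct, companionMat, ups, Pi.smul_apply, smul_eq_mul,
    mul_add, Finset.sum_add_distrib, mul_ite, mul_one, mul_zero]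
  by_cases hlast : (j : ℕ) = g - 1
  · have hpow : ξ * ξ ^ (j : ℕ) = ξ ^ g := by rw [← pow_succ']; congr 1; omega
    rw [Finset.sum_eq_zero fun i _ => if_neg (by omega), zero_add, hpow, hroot]
    simp only [hlast, if_true]
    exact Finset.sum_congr rfl fun _ _ => mul_comm _ _
  · simp only [hlast, if_false, Finset.sum_const_zero, add_zero]
    have hnext (i : Fin g) : (j : ℕ) + 1 = i ↔ i = ⟨j + 1, by omega⟩ := by
      rw [Fin.ext_iff, eq_comm]
    simp only [hnext, Finset.sum_ite_eq', Finset.mem_univ, if_true, pow_succ']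

lemma vecMul_aeval_of_vecMul_eq_smul {R n : Type*} [CommRing R] [Fintype n] [DecidableEq n]
    {A : Matrix n n R} {v : n → R} {μ : R} (h : v ᵥ* A = μ • v) (r : R[X]) :
    v ᵥ* aeval A r = r.eval μ • v := by
  induction r using Polynomial.induction_on with
  | C a => rw [aeval_C, Algebra.algebraMap_eq_smul_one, vecMul_smul, vecMul_one, eval_C]
  | add p q hp hq => rw [map_add, vecMul_add, hp, hq, eval_add, add_smul]
  | monomial k a ih =>
    rw [pow_succ, ← mul_assoc, map_mul, aeval_X, ← vecMul_vecMul, ih, smul_vecMul, h, smul_smul,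
      eval_mul_X]

lemma eq_zero_of_forall_ups_dotProduct_eq_zero {g : ℕ} {ξ : Fin g → ℂ}
    (hξ : Function.Injective ξ) {v : Fin g → ℂ} (h : ∀ j, ups g (ξ j) ⬝ᵥ v = 0) : v = 0 :=
  eq_zero_of_mulVec_eq_zero (det_vandermonde_ne_zero_iff.mpr hξ) (funext h)

theorem odd_coordinates_of_sum_general (g : ℕ) (P Q : Fin g → ℂ)
    (C : Matrix (Fin g) (Fin g) ℂ) (hC : C = companionMat g P)
    (r₁ r₂ : Polynomial ℂ) (H : Fin g → ℂ)
    (ξ : Fin g → ℂ) (hdist : Function.Injective ξ)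
    (hroot : ∀ j : Fin g, ξ j ^ g = ∑ k : Fin g, P k * ξ j ^ (k : ℕ))
    (hvanish : ∀ j : Fin g,
      r₁.eval (ξ j) * (ups g (ξ j) ⬝ᵥ Q) + ξ j ^ g * r₂.eval (ξ j)
        + (∑ k : Fin g, H k * ξ j ^ (k : ℕ)) = 0)
    (hinv : IsUnit (Polynomial.aeval C r₁)) :
    Q = -((Polynomial.aeval C r₁)⁻¹.mulVec (H + (Polynomial.aeval C r₂).mulVec P)) := by
  have heig (j : Fin g) : ups g (ξ j) ᵥ* C = ξ j • ups g (ξ j) :=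
    hC ▸ ups_vecMul_companionMat (hroot j)
  have hsum : aeval C r₁ *ᵥ Q + (H + aeval C r₂ *ᵥ P) = 0 := by
    refine eq_zero_of_forall_ups_dotProduct_eq_zero hdist fun j => ?_
    rw [dotProduct_add, dotProduct_add, dotProduct_mulVec, dotProduct_mulVec,
      vecMul_aeval_of_vecMul_eq_smul (heig j), vecMul_aeval_of_vecMul_eq_smul (heig j),
      smul_dotProduct, smul_dotProduct, ups_dotProduct _ _ H, ups_dotProduct _ _ P, ← hroot j]
    linear_combination hvanish j
  have hdet : IsUnit (aeval C r₁).det := (isUnit_iff_isUnit_det _).mp hinv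
  rw [← mulVec_neg, ← eq_neg_of_add_eq_zero_left hsum, mulVec_mulVec, nonsing_inv_mul _ hdet, one_mulVec]

theorem odd_coordinates_of_sum (g : ℕ) (hg : 1 ≤ g) (P Q : Fin g → ℂ)
    (C : Matrix (Fin g) (Fin g) ℂ) (hC : C = companionMat g P)
    (r₁ r₂ : Polynomial ℂ) (H : Fin g → ℂ)
    (ξ : Fin g → ℂ) (hdist : Function.Injective ξ)
    (hroot : ∀ j : Fin g, ξ j ^ g = ∑ k : Fin g, P k * ξ j ^ (k : ℕ))
    (hvanish : ∀ j : Fin g,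
      r₁.eval (ξ j) * (ups g (ξ j) ⬝ᵥ Q) + ξ j ^ g * r₂.eval (ξ j)
        + (∑ k : Fin g, H k * ξ j ^ (k : ℕ)) = 0)
    (hinv : IsUnit (Polynomial.aeval C r₁)) :
    Q = -((Polynomial.aeval C r₁)⁻¹.mulVec (H + (Polynomial.aeval C r₂).mulVec P)) :=
  odd_coordinates_of_sum_general g P Q C hC r₁ r₂ H ξ hdist hroot hvanish hinv
end
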